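/- arXiv:1305.2679 — 7 statements merged into one kernel-verified Lean document; each statement's English description precedes it below -/
import Mathlib

section
/- In a finite digraph, if a vertex v belongs to a strongly connected component S with at least two vertices, and one removes all outgoing arcs of a single chosen vertex w in S (pruning), then in the resulting digraph every vertex of S is grounded, i.e., is a leaf vertex or has a directed path to a leaf vertex. -/
/-- A leaf vertex: no outgoing arcs. -/
def IsLeaf {V : Type*} (A : V → V → Prop) (v : V) : Prop := ∀ w, ¬ A v w

/-- A vertex is grounded if it is a leaf or has a directed path to some leaf. -/
def Grounded {V : Type*} (A : V → V → Prop) (v : V) : Prop :=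
  IsLeaf A v ∨ ∃ w, IsLeaf A w ∧ Relation.TransGen A v w

/-- A strongly connected component: a nonempty set of pairwise mutually reachable
vertices that is maximal with this property. -/
def IsSCC {V : Type*} (A : V → V → Prop) (S : Set V) : Prop :=
  S.Nonempty ∧ (∀ i ∈ S, ∀ j ∈ S, Relation.ReflTransGen A i j) ∧
    ∀ v, (∃ i ∈ S, Relation.ReflTransGen A i v ∧ Relation.ReflTransGen A v i) → v ∈ S

/-- A leaf SCC: an SCC with at least two vertices and no arc leaving it. -/
def IsLeafSCC {V : Type*} (A : V → V → Prop) (S : Set V) : Prop :=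
  IsSCC A S ∧ (∃ i ∈ S, ∃ j ∈ S, i ≠ j) ∧ ∀ i ∈ S, ∀ j, A i j → j ∈ S

/-!
Pruning `w` turns `w` into a leaf. Every other vertex `u` of the SCC has a directed path
to `w`; cutting it at the first visit of `w` gives a path that never leaves `w`, so it
survives the pruning and grounds `u`.
-/

def prune {V : Type*} (A : V → V → Prop) (w : V) : V → V → Prop :=
  fun a b => A a b ∧ a ≠ w

theorem isLeaf_prune {V : Type*} (A : V → V → Prop) (w : V) : IsLeaf (prune A w) w :=
  fun _ h => h.2 rfl

theorem transGen_prune_of_reflTransGen {V : Type*} {A : V → V → Prop} {u w : V}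
    (h : Relation.ReflTransGen A u w) (huw : u ≠ w) : Relation.TransGen (prune A w) u w := by
  induction h using Relation.ReflTransGen.head_induction_on with
  | refl => exact absurd rfl huw
  | @head a b hab _ ih =>
    by_cases hbw : b = w
    · exact .single ⟨hbw ▸ hab, huw⟩
    · exact (ih hbw).head ⟨hab, huw⟩

theorem grounded_prune_of_reflTransGen {V : Type*} {A : V → V → Prop} {u w : V}
    (h : Relation.ReflTransGen A u w) : Grounded (prune A w) u := by
  by_cases huw : u = w
  · exact .inl (huw ▸ isLeaf_prune A w)
  · exact .inr ⟨w, isLeaf_prune A w, transGen_prune_of_reflTransGen h huw⟩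

theorem prune_scc_grounds_general {V : Type*} (A : V → V → Prop)
    (S : Set V) (hS : IsSCC A S)
    (w : V) (hw : w ∈ S) :
    ∀ u ∈ S, Grounded (fun a b => A a b ∧ a ≠ w) u :=
  fun u hu => grounded_prune_of_reflTransGen (hS.2.1 u hu w hw)

/-- Pruning an SCC with at least two vertices (removing all outgoing
arcs of one chosen vertex `w` of the SCC) grounds every vertex of the SCC. -/
theorem prune_scc_grounds {V : Type*} [Fintype V] (A : V → V → Prop)
    (S : Set V) (hS : IsSCC A S) (hcard : ∃ i ∈ S, ∃ j ∈ S, i ≠ j)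
    (w : V) (hw : w ∈ S) :
    ∀ u ∈ S, Grounded (fun a b => A a b ∧ a ≠ w) u :=
  prune_scc_grounds_general A S hS w hw
end

section
/- In a finite digraph, if an arc is added from a vertex v of a leaf SCC S to a leaf vertex u outside S, then in the resulting digraph every vertex of S is grounded, and S is no longer a leaf SCC. -/
theorem IsLeaf.or_arc {V : Type*} {A : V → V → Prop} {u v : V} (hu : IsLeaf A u) (huv : u ≠ v) :
    IsLeaf (fun a b => A a b ∨ (a = v ∧ b = u)) u
  | _, .inl h => hu _ h
  | _, .inr ⟨h, _⟩ => huv h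

theorem Grounded.of_reflTransGen_of_adj_leaf {V : Type*} {A : V → V → Prop} {s v w : V}
    (hsv : Relation.ReflTransGen A s v) (hvw : A v w) (hw : IsLeaf A w) : Grounded A s :=
  .inr ⟨w, hw, .tail' hsv hvw⟩

theorem IsLeafSCC.mem_of_adj {V : Type*} {A : V → V → Prop} {S : Set V} (hS : IsLeafSCC A S)
    {i j : V} (hi : i ∈ S) (hij : A i j) : j ∈ S :=
  hS.2.2 i hi j hij

theorem IsLeafSCC.reflTransGen {V : Type*} {A : V → V → Prop} {S : Set V} (hS : IsLeafSCC A S)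
    {i j : V} (hi : i ∈ S) (hj : j ∈ S) : Relation.ReflTransGen A i j :=
  hS.1.2.1 i hi j hj

theorem append_arc_to_leaf_grounds_general {V : Type*} (A : V → V → Prop)
    (S : Set V) (hS : IsLeafSCC A S) (v : V) (hv : v ∈ S)
    (u : V) (hu : u ∉ S) (huleaf : IsLeaf A u) :
    (∀ s ∈ S, Grounded (fun a b => A a b ∨ (a = v ∧ b = u)) s) ∧
      ¬ IsLeafSCC (fun a b => A a b ∨ (a = v ∧ b = u)) S := by
  have hvu : (fun a b => A a b ∨ (a = v ∧ b = u)) v u := .inr ⟨rfl, rfl⟩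
  have huv : u ≠ v := fun h => hu (h ▸ hv)
  refine ⟨fun s hs => ?_, fun hS' => hu (hS'.mem_of_adj hv hvu)⟩
  have hsv : Relation.ReflTransGen (fun a b => A a b ∨ (a = v ∧ b = u)) s v :=
    Relation.ReflTransGen.mono (fun _ _ => Or.inl) _ _ (hS.reflTransGen hs hv)
  exact .of_reflTransGen_of_adj_leaf hsv hvu (huleaf.or_arc huv)

/-- Adding an arc from a vertex `v` of a leaf SCC `S` to a leaf vertex
`u` outside `S` grounds every vertex of `S`, and `S` is no longer a leaf SCC. -/
theorem append_arc_to_leaf_grounds {V : Type*} [Fintype V] (A : V → V → Prop)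
    (S : Set V) (hS : IsLeafSCC A S) (v : V) (hv : v ∈ S)
    (u : V) (hu : u ∉ S) (huleaf : IsLeaf A u) :
    (∀ s ∈ S, Grounded (fun a b => A a b ∨ (a = v ∧ b = u)) s) ∧
      ¬ IsLeafSCC (fun a b => A a b ∨ (a = v ∧ b = u)) S :=
  append_arc_to_leaf_grounds_general A S hS v hv u hu huleaf
end

section
/- Any uniprior multicast index code allows every receiver to decode the messages of all its predecessors: if there is a directed path from vertex j to vertex i in the information-flow digraph G, then receiver i can determine message x_j as a function of the codeword and its prior message x_i. Formally, for any encoding function E on the messages and decoding functions satisfying that each receiver i can recover x_k for every arc (k → i), receiver i can also recover x_j for every predecessor j of i. -/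
def Recoverable {ι α C : Type*} (E : (ι → α) → C) (j i : ι) : Prop :=
  ∃ f : C → α → α, ∀ x : ι → α, f (E x) (x i) = x j

instance Recoverable.isTrans {ι α C : Type*} (E : (ι → α) → C) :
    IsTrans ι (Recoverable E) where
  trans _ _ _ := fun ⟨f, hf⟩ ⟨g, hg⟩ =>
    ⟨fun c a => f c (g c a), fun x => by simp only [hg, hf]⟩

/-- For any valid uniprior multicast index code (encoder `E`, with a
decoder for every arc `(k → i)` recovering `x k` from the codeword and the prior
`x i`), every receiver `i` can also recover the message of every predecessor `j`. -/
theorem decode_predecessors {n : ℕ} {C : Type*} (A : Fin n → Fin n → Prop)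
    (E : (Fin n → Bool) → C)
    (hdec : ∀ k i : Fin n, A k i →
      ∃ D : C → Bool → Bool, ∀ x : Fin n → Bool, D (E x) (x i) = x k)
    (i j : Fin n) (hpred : Relation.TransGen A j i) :
    ∃ f : C → Bool → Bool, ∀ x : Fin n → Bool, f (E x) (x i) = x j :=
  Relation.transGen_minimal (r' := Recoverable E) hdec j i hpred
end

section
/- The optimal uniprior multicast index codelength is at least the number of non-leaf vertices in any grounded digraph obtained by reducing the decoding requirements: if G† is a grounded digraph on the vertices (every vertex is a leaf or has a path to a leaf, leaves have empty messages), then any valid index code for G† has length at least V_out(G†) bits, where V_out(G†) is the number of vertices with at least one outgoing arc. -/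
section Decoding

variable {V β γ : Type*} {A : V → V → Prop} {E : (V → β) → γ}

theorem eq_of_transGen_of_decodable
    (hdec : ∀ j i, A j i → ∃ D : γ → β → β, ∀ x, D (E x) (x i) = x j)
    {x x' : V → β} (hE : E x = E x') {v w : V} (hvw : Relation.TransGen A v w)
    (hw : x w = x' w) : x v = x' v := by
  induction hvw using Relation.TransGen.head_induction_on with
  | single hab =>
    obtain ⟨D, hD⟩ := hdec _ _ hab
    rw [← hD x, ← hD x', hE, hw]
  | head hab _ ih =>
    obtain ⟨D, hD⟩ := hdec _ _ hab
    rw [← hD x, ← hD x', hE, ih]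

theorem eq_of_grounded_of_decodable (hground : ∀ v, Grounded A v)
    (hdec : ∀ j i, A j i → ∃ D : γ → β → β, ∀ x, D (E x) (x i) = x j)
    {x x' : V → β} (hE : E x = E x') (hleaf : ∀ v, IsLeaf A v → x v = x' v) : x = x' := by
  funext v
  rcases hground v with hv | ⟨w, hw, hvw⟩
  · exact hleaf v hv
  · exact eq_of_transGen_of_decodable hdec hE hvw (hleaf w hw)

end Decoding

theorem ncard_le_of_eq_of_eqOn_compl {V : Type*} [Finite V] {L : ℕ} (S : Set V)
    (E : (V → Bool) → (Fin L → Bool))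
    (hE : ∀ x x', E x = E x' → (∀ v ∉ S, x v = x' v) → x = x') : S.ncard ≤ L := by
  classical
  have := Fintype.ofFinite V
  let extend (c : S → Bool) : V → Bool := fun v => if h : v ∈ S then c ⟨v, h⟩ else false
  have hinj : Function.Injective (E ∘ extend) := by
    intro c c' h
    have hext := hE _ _ h fun v hv => by simp only [extend, dif_neg hv]
    funext v
    simpa only [extend, dif_pos v.2] using congrFun hext v
  have hcard := Fintype.card_le_of_injective _ hinj
  rw [Fintype.card_fun, Fintype.card_fun, Fintype.card_bool, Fintype.card_fin,
    Nat.pow_le_pow_iff_right one_lt_two] at hcard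
  rwa [Set.ncard_eq_toFinset_card', Set.toFinset_card]

theorem grounded_lower_bound_general {n L : ℕ} (A : Fin n → Fin n → Prop)
    (hground : ∀ v, Grounded A v)
    (E : (Fin n → Bool) → (Fin L → Bool))
    (hdec : ∀ j i : Fin n, A j i →
      ∃ D : (Fin L → Bool) → Bool → Bool, ∀ x : Fin n → Bool, D (E x) (x i) = x j) :
    {v : Fin n | ¬ IsLeaf A v}.ncard ≤ L :=
  ncard_le_of_eq_of_eqOn_compl _ E fun _ _ hE hleaf =>
    eq_of_grounded_of_decodable hground hdec hE fun v hv => hleaf v (not_not_intro hv)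

/-- Lower bound from a grounded digraph: if `G†` is grounded (every
vertex is a leaf or has a path to a leaf), leaves carry empty messages (the
encoder depends only on non-leaf messages), and there is a valid index code of
length `L`, then `L ≥ V_out(G†)`, the number of non-leaf vertices. -/
theorem grounded_lower_bound {n L : ℕ} (A : Fin n → Fin n → Prop)
    (hground : ∀ v, Grounded A v)
    (E : (Fin n → Bool) → (Fin L → Bool))
    (hsimp : ∀ x x' : Fin n → Bool, (∀ v, ¬ IsLeaf A v → x v = x' v) → E x = E x')
    (hdec : ∀ j i : Fin n, A j i →
      ∃ D : (Fin L → Bool) → Bool → Bool, ∀ x : Fin n → Bool, D (E x) (x i) = x j) :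
    {v : Fin n | ¬ IsLeaf A v}.ncard ≤ L :=
  grounded_lower_bound_general A hground E hdec
end

section
/- For any index code for a multi-sender uniprior multicast problem, any receiver (indeed any party knowing only the codeword) can decode the messages of every message-disconnected leaf SCC. Formally: suppose the vertex set V is partitioned into nonempty V1 and V2 with no message-graph edge between V1 and V2, so the codeword splits as c = (c1, c2) where c1 depends only on messages indexed by V1 and c2 only on messages indexed by V2. If a,b are two vertices in a common SCC of the information-flow digraph with a ∈ V1, b ∈ V2, then x_b is a deterministic function of c2 alone (hence of c alone). -/
/-!
Composing the decoders along the path `b →* a` of the information-flow digraph, receiver `a`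
recovers `x b` from `(c1, c2)` and `x a`. Given two inputs `x, x'` with the same `c2`, splice
them into the input `y` that agrees with `x` on `V2` and with `x'` off `V2`: then `y` has the
`c2` of `x` but the `c1` and side information `y a` of `x'`, so the decoder gives
`x b = y b = x' b`.
-/

section Decoding

variable {ι β C : Type*}

/-- Receiver `i`, knowing `x i` and the codeword `E x`, can recover `x k`; the argument order
matches the arc `k → i` of the information-flow digraph. -/
def IsDecodableAt (E : (ι → β) → C) (k i : ι) : Prop :=
  ∃ D : C → β → β, ∀ x, D (E x) (x i) = x k

instance (E : (ι → β) → C) : Std.Refl (IsDecodableAt E) :=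
  ⟨fun _ => ⟨fun _ t => t, fun _ => rfl⟩⟩

instance (E : (ι → β) → C) : IsTrans ι (IsDecodableAt E) :=
  ⟨fun _ _ _ ⟨D, hD⟩ ⟨D', hD'⟩ => ⟨fun c t => D c (D' c t),
    fun x => (congrArg (D (E x)) (hD' x)).trans (hD x)⟩⟩

theorem isDecodableAt_of_reflTransGen {E : (ι → β) → C} {A : ι → ι → Prop}
    (hA : ∀ k i, A k i → IsDecodableAt E k i) {k i : ι} (h : Relation.ReflTransGen A k i) :
    IsDecodableAt E k i :=
  Relation.reflTransGen_le_of_le hA k i h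

end Decoding

theorem factorsThrough_of_decoder {ι β C1 C2 : Type*} {V1 V2 : Set ι} (hV : Disjoint V1 V2)
    {E1 : (ι → β) → C1} {E2 : (ι → β) → C2}
    (hE1 : ∀ x x' : ι → β, (∀ v ∈ V1, x v = x' v) → E1 x = E1 x')
    (hE2 : ∀ x x' : ι → β, (∀ v ∈ V2, x v = x' v) → E2 x = E2 x')
    {a b : ι} (ha : a ∈ V1) (hb : b ∈ V2) {D : C1 × C2 → β → β}
    (hD : ∀ x, D (E1 x, E2 x) (x a) = x b) :
    (fun x : ι → β => x b).FactorsThrough E2 := by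
  classical
  intro x x' hx
  set y := V2.piecewise x x'
  have hyV1 : ∀ v ∈ V1, y v = x' v := fun v hv =>
    V2.piecewise_eq_of_notMem _ _ (Set.disjoint_left.1 hV hv)
  calc x b = y b := (V2.piecewise_eq_of_mem _ _ hb).symm
    _ = D (E1 y, E2 y) (y a) := (hD y).symm
    _ = D (E1 x', E2 x') (x' a) := by
      rw [hE1 y x' hyV1, hE2 y x (fun v hv => V2.piecewise_eq_of_mem _ _ hv), hx, hyV1 a ha]
    _ = x' b := hD x'

theorem message_disconnected_decodable_general {n : ℕ} {C1 C2 : Type*}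
    (A : Fin n → Fin n → Prop)
    (V1 V2 : Set (Fin n)) (hpart : ∀ v, v ∈ V1 ↔ v ∉ V2)
    (E1 : (Fin n → Bool) → C1) (E2 : (Fin n → Bool) → C2)
    (h1 : ∀ x x' : Fin n → Bool, (∀ v ∈ V1, x v = x' v) → E1 x = E1 x')
    (h2 : ∀ x x' : Fin n → Bool, (∀ v ∈ V2, x v = x' v) → E2 x = E2 x')
    (hdec : ∀ k i : Fin n, A k i →
      ∃ D : C1 → C2 → Bool → Bool, ∀ x : Fin n → Bool, D (E1 x) (E2 x) (x i) = x k)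
    (a b : Fin n) (ha : a ∈ V1) (hb : b ∈ V2)
    (hscc : Relation.ReflTransGen A a b ∧ Relation.ReflTransGen A b a) :
    ∃ g : C2 → Bool, ∀ x : Fin n → Bool, g (E2 x) = x b := by
  have hV : Disjoint V1 V2 := Set.disjoint_left.2 fun v hv => (hpart v).1 hv
  have hdec' : ∀ k i, A k i → IsDecodableAt (fun x => (E1 x, E2 x)) k i := fun k i hki => by
    obtain ⟨D, hD⟩ := hdec k i hki
    exact ⟨fun c => D c.1 c.2, hD⟩
  obtain ⟨D, hD⟩ := isDecodableAt_of_reflTransGen hdec' hscc.2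
  exact ⟨Function.extend E2 (fun x => x b) fun _ => false,
    (factorsThrough_of_decoder hV h1 h2 ha hb hD).extend_apply _⟩

/-- For any multi-sender index code whose codeword splits as
`c = (c1, c2)` with `c1` depending only on messages of `V1` and `c2` only on
messages of `V2` (a partition with no message edge across), if `a ∈ V1` and
`b ∈ V2` lie in a common SCC of the information-flow digraph, then `x b` is a
deterministic function of `c2` alone. -/
theorem message_disconnected_decodable {n : ℕ} {C1 C2 : Type*}
    (A : Fin n → Fin n → Prop)
    (V1 V2 : Set (Fin n)) (hpart : ∀ v, v ∈ V1 ↔ v ∉ V2)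
    (hne1 : V1.Nonempty) (hne2 : V2.Nonempty)
    (E1 : (Fin n → Bool) → C1) (E2 : (Fin n → Bool) → C2)
    (h1 : ∀ x x' : Fin n → Bool, (∀ v ∈ V1, x v = x' v) → E1 x = E1 x')
    (h2 : ∀ x x' : Fin n → Bool, (∀ v ∈ V2, x v = x' v) → E2 x = E2 x')
    (hdec : ∀ k i : Fin n, A k i →
      ∃ D : C1 → C2 → Bool → Bool, ∀ x : Fin n → Bool, D (E1 x) (E2 x) (x i) = x k)
    (a b : Fin n) (ha : a ∈ V1) (hb : b ∈ V2)
    (hscc : Relation.ReflTransGen A a b ∧ Relation.ReflTransGen A b a) :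
    ∃ g : C2 → Bool, ∀ x : Fin n → Bool, g (E2 x) = x b :=
  message_disconnected_decodable_general A V1 V2 hpart E1 E2 h1 h2 hdec a b ha hb hscc
end

section
/- The pairwise-XOR coding scheme achieves codelength V_out(G) − (N_connected + N_tree): if the information-flow digraph G contains N_connected vertex-disjoint message-connected leaf SCCs and N_tree vertex-disjoint connecting trees (disjoint from the SCCs), then there is a valid multi-sender index code of total length V_out(G) − (N_connected + N_tree), where V_out(G) is the number of non-leaf vertices of G. -/
/-- A multi-sender uniprior multicast index code of total length `L` exists:
sender `s` (for `s : Fin nS`) encodes only the messages in `M s` into `ℓ s` bits,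
and for every arc `(j → i)` receiver `i` can recover `x j` from the concatenated
codeword and its prior `x i`. -/
def Achievable {n nS : ℕ} (A : Fin n → Fin n → Prop) (M : Fin nS → Set (Fin n))
    (L : ℕ) : Prop :=
  ∃ ℓ : Fin nS → ℕ, (∑ s, ℓ s) = L ∧
    ∃ E : (s : Fin nS) → (Fin n → Bool) → Fin (ℓ s) → Bool,
      (∀ s, ∀ x x' : Fin n → Bool, (∀ v ∈ M s, x v = x' v) → E s x = E s x') ∧
      ∀ j i : Fin n, A j i →
        ∃ D : ((s : Fin nS) → Fin (ℓ s) → Bool) → Bool → Bool,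
          ∀ x : Fin n → Bool, D (fun s => E s x) (x i) = x j

open Finset Function

namespace SimpleGraph

variable {V : Type*} {G : SimpleGraph V} {u v : V}

theorem Reachable.exists_adj_dist_lt (h : G.Reachable u v) (hne : u ≠ v) :
    ∃ w, G.Adj u w ∧ G.dist w v < G.dist u v := by
  obtain ⟨p, hp⟩ := h.exists_walk_length_eq_dist
  cases p with
  | nil => exact absurd rfl hne
  | cons hadj q =>
    refine ⟨_, hadj, ?_⟩
    rw [← hp, Walk.length_cons]
    exact Nat.lt_succ_of_le (dist_le q)

theorem reachable_fromRel_of_reflTransGen {r : V → V → Prop}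
    (h : Relation.ReflTransGen r u v) : (fromRel r).Reachable u v := by
  induction h with
  | refl => rfl
  | @tail b c _ hbc ih =>
    by_cases hb : b = c
    · exact hb ▸ ih
    · exact ih.trans (Adj.reachable ((fromRel_adj ..).2 ⟨hb, .inl hbc⟩))

end SimpleGraph

theorem apply_eq_apply_of_descent {V α : Type*} {W : Set V} {r : V} {p : V → V} (d : V → ℕ)
    (hp : ∀ v ∈ W, v ≠ r → p v ∈ W ∧ d (p v) < d v) {y : V → α}
    (hy : ∀ v ∈ W, v ≠ r → y v = y (p v)) : ∀ v ∈ W, y v = y r := by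
  intro v
  induction h : d v using Nat.strong_induction_on generalizing v with
  | _ m ih =>
    intro hv
    by_cases hvr : v = r
    · rw [hvr]
    · obtain ⟨hpv, hlt⟩ := hp v hv hvr
      rw [hy v hv hvr]
      exact ih _ (h ▸ hlt) _ rfl hpv

theorem xor_eq_xor_root_of_descent {V : Type*} {W : Set V} {r : V} {p : V → V} (d : V → ℕ)
    (hp : ∀ v ∈ W, v ≠ r → p v ∈ W ∧ d (p v) < d v) {x x' : V → Bool}
    (hx : ∀ v ∈ W, v ≠ r → (x v ^^ x (p v)) = (x' v ^^ x' (p v))) :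
    ∀ v ∈ W, (x v ^^ x' v) = (x r ^^ x' r) :=
  have xor_swap : ∀ a b c e : Bool, (a ^^ b) = (c ^^ e) → (a ^^ c) = (b ^^ e) := by decide
  apply_eq_apply_of_descent d hp fun v hv hne => xor_swap _ _ _ _ (hx v hv hne)

/-- The sets coded together by one spanning tree of XORs: leaf SCCs and connecting trees. -/
structure IsXorBlock {V : Type*} (A U : V → V → Prop) (S : Set V) : Prop where
  nonempty : S.Nonempty
  not_isLeaf : ∀ i ∈ S, ¬ IsLeaf A i
  closed : ∀ i ∈ S, ∀ j, A i j → j ∈ S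
  connected : ∀ a ∈ S, ∀ b ∈ S,
    Relation.ReflTransGen (fun i j => U i j ∧ i ∈ S ∧ j ∈ S) a b

theorem IsLeafSCC.not_isLeaf {V : Type*} {A : V → V → Prop} {S : Set V} (h : IsLeafSCC A S) :
    ∀ i ∈ S, ¬ IsLeaf A i := by
  obtain ⟨⟨-, hreach, -⟩, ⟨a, ha, b, hb, hab⟩, -⟩ := h
  intro i hi hleaf
  obtain ⟨j, hj, hij⟩ : ∃ j ∈ S, i ≠ j := by
    by_cases h : i = a
    exacts [⟨b, hb, h ▸ hab⟩, ⟨a, ha, h⟩]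
  rcases (hreach i hi j hj).cases_head with rfl | ⟨k, hik, -⟩
  · exact hij rfl
  · exact hleaf k hik

theorem IsLeafSCC.isXorBlock {V : Type*} {A U : V → V → Prop} {S : Set V} (h : IsLeafSCC A S)
    (hconn : ∀ a ∈ S, ∀ b ∈ S, Relation.ReflTransGen (fun i j => U i j ∧ i ∈ S ∧ j ∈ S) a b) :
    IsXorBlock A U S :=
  ⟨h.1.1, h.not_isLeaf, h.2.2, hconn⟩

theorem pairwise_disjoint_sumElim {α β γ : Type*} [PartialOrder γ] [OrderBot γ] {f : α → γ}
    {g : β → γ} (hf : Pairwise (Disjoint on f)) (hg : Pairwise (Disjoint on g))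
    (hfg : ∀ a b, Disjoint (f a) (g b)) : Pairwise (Disjoint on Sum.elim f g) := by
  rintro (a | b) (a' | b') hne
  · exact hf fun h => hne (congrArg Sum.inl h)
  · exact hfg a b'
  · exact (hfg a' b).symm
  · exact hg fun h => hne (congrArg Sum.inr h)

section Blocks

variable {V ι : Type*} {A U : V → V → Prop} {S : ι → Set V}

theorem eq_of_mem_of_pairwise_disjoint (hdisj : Pairwise (Disjoint on S)) {v : V} {k k' : ι}
    (hk : v ∈ S k) (hk' : v ∈ S k') : k = k' :=
  by_contra fun hne => Set.disjoint_left.1 (hdisj hne) hk hk'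

theorem exists_parent_descent (hS : ∀ k, IsXorBlock A U (S k)) (hdisj : Pairwise (Disjoint on S))
    {r : ι → V} (hr : ∀ k, r k ∈ S k) :
    ∃ (p : V → V) (d : ι → V → ℕ), ∀ k, ∀ v ∈ S k, v ≠ r k →
      (U v (p v) ∨ U (p v) v) ∧ p v ∈ S k ∧ d k (p v) < d k v := by
  let G : ι → SimpleGraph V := fun k => .fromRel fun a b => U a b ∧ a ∈ S k ∧ b ∈ S k
  have hparent : ∀ v, ∃ w, ∀ k, v ∈ S k → v ≠ r k →
      (G k).Adj v w ∧ (G k).dist w (r k) < (G k).dist v (r k) := by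
    intro v
    by_cases h : ∃ k, v ∈ S k ∧ v ≠ r k
    · obtain ⟨k, hk, hne⟩ := h
      obtain ⟨w, hw⟩ := (SimpleGraph.reachable_fromRel_of_reflTransGen
        ((hS k).connected v hk (r k) (hr k))).exists_adj_dist_lt hne
      exact ⟨w, fun k' hk' _ => eq_of_mem_of_pairwise_disjoint hdisj hk hk' ▸ hw⟩
    · exact ⟨v, fun k hk hne => (h ⟨k, hk, hne⟩).elim⟩
  choose p hp using hparent
  refine ⟨p, fun k v => (G k).dist v (r k), fun k v hv hne => ?_⟩
  obtain ⟨hadj, hlt⟩ := hp v k hv hne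
  rcases (SimpleGraph.fromRel_adj _ _ _).1 hadj |>.2 with ⟨hU, -, hpv⟩ | ⟨hU, hpv, -⟩
  · exact ⟨.inl hU, hpv, hlt⟩
  · exact ⟨.inr hU, hpv, hlt⟩

open Classical in
noncomputable def xorBit (S : ι → Set V) (r : ι → V) (p : V → V) (v : V) (x : V → Bool) : Bool :=
  if ∃ k, v ∈ S k ∧ v ≠ r k then x v ^^ x (p v) else x v

theorem exists_xorBit_sender {W : Type*} {M : W → Set V} {r : ι → V} {p : V → V}
    (hcov : ∀ i, ∃ s, i ∈ M s) (hU : ∀ i j, U i j → ∃ s, i ∈ M s ∧ j ∈ M s)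
    (hp : ∀ k, ∀ v ∈ S k, v ≠ r k → U v (p v) ∨ U (p v) v) :
    ∃ σ : V → W, ∀ v (x x' : V → Bool), (∀ u ∈ M (σ v), x u = x' u) →
      xorBit S r p v x = xorBit S r p v x' := by
  have hsender : ∀ v, ∃ s, v ∈ M s ∧ ((∃ k, v ∈ S k ∧ v ≠ r k) → p v ∈ M s) := by
    intro v
    by_cases hv : ∃ k, v ∈ S k ∧ v ≠ r k
    · obtain ⟨k, hk, hne⟩ := hv
      obtain ⟨s, hs⟩ : ∃ s, v ∈ M s ∧ p v ∈ M s := by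
        rcases hp k v hk hne with h | h
        exacts [hU _ _ h, (hU _ _ h).imp fun _ => And.symm]
      exact ⟨s, hs.1, fun _ => hs.2⟩
    · obtain ⟨s, hs⟩ := hcov v
      exact ⟨s, hs, fun h => (hv h).elim⟩
  choose σ hσ using hsender
  refine ⟨σ, fun v x x' hxx' => ?_⟩
  obtain ⟨hv, hpv⟩ := hσ v
  unfold xorBit
  split_ifs with h
  · rw [hxx' _ hv, hxx' _ (hpv h)]
  · exact hxx' _ hv

theorem eq_of_forall_xorBit_eq (hS : ∀ k, IsXorBlock A U (S k)) (hdisj : Pairwise (Disjoint on S))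
    {r : ι → V} (hr : ∀ k, r k ∈ S k) {p : V → V} {d : ι → V → ℕ}
    (hp : ∀ k, ∀ v ∈ S k, v ≠ r k → p v ∈ S k ∧ d k (p v) < d k v) {x x' : V → Bool}
    (hbits : ∀ v, ¬ IsLeaf A v → (∀ k, r k ≠ v) → xorBit S r p v x = xorBit S r p v x')
    {i j : V} (hji : A j i) (hi : x i = x' i) : x j = x' j := by
  by_cases hj : ∃ k, j ∈ S k
  · obtain ⟨k, hjk⟩ := hj
    have hchild : ∀ v ∈ S k, v ≠ r k → (x v ^^ x (p v)) = (x' v ^^ x' (p v)) := by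
      intro v hv hne
      have hroot : ∀ k', r k' ≠ v := by
        rintro k' rfl
        exact hne (congrArg r (eq_of_mem_of_pairwise_disjoint hdisj (hr k') hv))
      have hc : ∃ k, v ∈ S k ∧ v ≠ r k := ⟨k, hv, hne⟩
      simpa [xorBit, hc] using hbits v ((hS k).not_isLeaf v hv) hroot
    have hconst := xor_eq_xor_root_of_descent (d k) (hp k) hchild
    have h := (hconst j hjk).trans (hconst i ((hS k).closed j hjk i hji)).symm
    simpa [hi] using h
  · have hnc : ¬ ∃ k, j ∈ S k ∧ j ≠ r k := fun ⟨k, hk, _⟩ => hj ⟨k, hk⟩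
    simpa [xorBit, hnc] using
      hbits j (fun h => h i hji) fun k h => hj ⟨k, h ▸ hr k⟩

end Blocks

theorem card_sdiff_image_univ {α ι : Type*} [DecidableEq α] [Fintype ι] {s : Finset α}
    {r : ι → α} (hr : Injective r) (hrs : ∀ k, r k ∈ s) :
    #(s \ univ.image r) = #s - Fintype.card ι := by
  rw [card_sdiff_of_subset (image_subset_iff.2 fun k _ => hrs k), card_image_of_injective _ hr,
    card_univ]

theorem achievable_of_bits {n nS : ℕ} {A : Fin n → Fin n → Prop} {M : Fin nS → Set (Fin n)}
    {ι : Type*} (T : Finset ι) (σ : ι → Fin nS) (β : ι → (Fin n → Bool) → Bool)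
    (hβ : ∀ t ∈ T, ∀ x x' : Fin n → Bool, (∀ u ∈ M (σ t), x u = x' u) → β t x = β t x')
    (hdec : ∀ j i, A j i → ∀ x x' : Fin n → Bool,
      (∀ t ∈ T, β t x = β t x') → x i = x' i → x j = x' j) :
    Achievable A M #T := by
  classical
  let F : Fin nS → Finset ι := fun s => T.filter (σ · = s)
  let E : (s : Fin nS) → (Fin n → Bool) → Fin #(F s) → Bool :=
    fun s x m => β ((F s).equivFin.symm m) x
  have hbit : ∀ t (ht : t ∈ T) x,
      E (σ t) x ((F (σ t)).equivFin ⟨t, mem_filter.2 ⟨ht, rfl⟩⟩) = β t x :=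
    fun t ht x => by simp only [E, Equiv.symm_apply_apply]
  refine ⟨fun s => #(F s), (card_eq_sum_card_fiberwise fun t _ => mem_univ (σ t)).symm, E,
    fun s x x' hxx' => funext fun m => ?_, fun j i hji => ?_⟩
  · obtain ⟨ht, hσ⟩ := mem_filter.1 ((F s).equivFin.symm m).2
    exact hβ _ ht x x' fun u hu => hxx' u (hσ ▸ hu)
  · let code : (Fin n → Bool) → ((s : Fin nS) → Fin #(F s) → Bool) × Bool :=
      fun x => (fun s => E s x, x i)
    have hfactor : FactorsThrough (· j) code := fun x x' h =>
      hdec j i hji x x' (fun t ht => by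
        rw [← hbit t ht x, ← hbit t ht x']
        exact congrFun (congrFun (congrArg Prod.fst h) (σ t)) _) (congrArg Prod.snd h)
    exact ⟨fun c b => extend code (· j) (fun _ => false) (c, b), hfactor.extend_apply _⟩

theorem achievable_of_xorBlocks {n nS : ℕ} {ι : Type*} [Fintype ι] {A U : Fin n → Fin n → Prop}
    {M : Fin nS → Set (Fin n)} (hcov : ∀ i, ∃ s, i ∈ M s)
    (hU : ∀ i j, U i j → ∃ s, i ∈ M s ∧ j ∈ M s) {S : ι → Set (Fin n)}
    (hS : ∀ k, IsXorBlock A U (S k)) (hdisj : Pairwise (Disjoint on S)) :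
    Achievable A M ({v : Fin n | ¬ IsLeaf A v}.ncard - Fintype.card ι) := by
  classical
  choose r hr using fun k => (hS k).nonempty
  obtain ⟨p, d, hp⟩ := exists_parent_descent hS hdisj hr
  obtain ⟨σ, hσ⟩ := exists_xorBit_sender hcov hU fun k v hv hne => (hp k v hv hne).1
  have hr_inj : Injective r := fun k k' h =>
    eq_of_mem_of_pairwise_disjoint hdisj (hr k) (h ▸ hr k')
  have hcard := card_sdiff_image_univ hr_inj (s := {v : Fin n | ¬ IsLeaf A v}.toFinset)
    fun k => by simpa using (hS k).not_isLeaf _ (hr k)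
  rw [Set.ncard_eq_toFinset_card', ← hcard]
  refine achievable_of_bits _ σ (xorBit S r p) (fun v _ => hσ v) fun j i hji x x' hbits hi =>
    eq_of_forall_xorBit_eq hS hdisj hr (fun k v hv hne => (hp k v hv hne).2)
      (fun v hv hroot => hbits v (by simpa [hv] using hroot)) hji hi

/-- Pairwise-XOR achievability. Given `Nc` pairwise-disjoint
message-connected leaf SCCs of the information-flow digraph `A` and `Nt`
connecting trees (pairwise disjoint and disjoint from the SCCs; each consisting
of non-leaf vertices, with no arc of `A` leaving it, and connected in the message
graph `U` using only internal vertices), there is a valid multi-sender index code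
of total length `V_out(G) − (Nc + Nt)`. -/
theorem pairwise_xor_achievability {n nS Nc Nt : ℕ}
    (A : Fin n → Fin n → Prop) (M : Fin nS → Set (Fin n))
    (hcov : ∀ i, ∃ s, i ∈ M s)
    (U : Fin n → Fin n → Prop)
    (hU : ∀ i j, U i j ↔ i ≠ j ∧ ∃ s, i ∈ M s ∧ j ∈ M s)
    (Cs : Fin Nc → Set (Fin n)) (Ts : Fin Nt → Set (Fin n))
    (hCs : ∀ c, IsLeafSCC A (Cs c) ∧
      ∀ a ∈ Cs c, ∀ b ∈ Cs c,
        Relation.ReflTransGen (fun i j => U i j ∧ i ∈ Cs c ∧ j ∈ Cs c) a b)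
    (hTs : ∀ t, (Ts t).Nonempty ∧ (∀ i ∈ Ts t, ¬ IsLeaf A i) ∧
      (∀ i ∈ Ts t, ∀ j, A i j → j ∈ Ts t) ∧
      ∀ a ∈ Ts t, ∀ b ∈ Ts t,
        Relation.ReflTransGen (fun i j => U i j ∧ i ∈ Ts t ∧ j ∈ Ts t) a b)
    (hdisjC : ∀ c c', c ≠ c' → Disjoint (Cs c) (Cs c'))
    (hdisjT : ∀ t t', t ≠ t' → Disjoint (Ts t) (Ts t'))
    (hdisjCT : ∀ c t, Disjoint (Cs c) (Ts t)) :
    Achievable A M ({v : Fin n | ¬ IsLeaf A v}.ncard - (Nc + Nt)) := by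
  have hblocks : ∀ k, IsXorBlock A U (Sum.elim Cs Ts k) := by
    rintro (c | t)
    · exact (hCs c).1.isXorBlock (hCs c).2
    · obtain ⟨hne, hleaf, hclosed, hconn⟩ := hTs t
      exact ⟨hne, hleaf, hclosed, hconn⟩
  have h := achievable_of_xorBlocks hcov (fun i j h => ((hU i j).1 h).2) hblocks
    (pairwise_disjoint_sumElim hdisjC hdisjT hdisjCT)
  rwa [Fintype.card_sum, Fintype.card_fin, Fintype.card_fin] at h
end

section
/- Adding an arc from a leaf SCC to a vertex outside it cannot increase the number of leaf SCCs: let G' be obtained from finite digraph G by adding one arc (v → u) where v belongs to a leaf SCC S of G and u ∉ S. Then the number of leaf SCCs of G' is at most the number of leaf SCCs of G. -/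
/-!
A leaf SCC of `G'` avoiding `v` is closed under the arcs of `G'`, so no path inside it ever uses
the new arc `v → u`; hence it is already a leaf SCC of `G`. Since at most one SCC of `G'`
contains `v`, sending that one to `S` and fixing all others injects the leaf SCCs of `G'` into
those of `G`.
-/

open Relation

section

variable {V : Type*} {A B : V → V → Prop} {S T : Set V}

theorem IsSCC.eq_of_mem (hS : IsSCC A S) (hT : IsSCC A T) {x : V} (hxS : x ∈ S)
    (hxT : x ∈ T) : S = T := by
  obtain ⟨-, hS_conn, hS_max⟩ := hS
  obtain ⟨-, hT_conn, hT_max⟩ := hT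
  ext w
  exact ⟨fun hw => hT_max w ⟨x, hxT, hS_conn x hxS w hw, hS_conn w hw x hxS⟩,
    fun hw => hS_max w ⟨x, hxS, hT_conn x hxT w hw, hT_conn w hw x hxT⟩⟩

theorem Relation.ReflTransGen.mem_and_of_closed (hclosed : ∀ i ∈ T, ∀ j, B i j → j ∈ T)
    (hsub : ∀ i ∈ T, ∀ j, B i j → A i j) {i j : V} (hi : i ∈ T) (hij : ReflTransGen B i j) :
    j ∈ T ∧ ReflTransGen A i j := by
  induction hij with
  | refl => exact ⟨hi, .refl⟩
  | tail _ hbc ih =>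
    obtain ⟨hb, hpath⟩ := ih
    exact ⟨hclosed _ hb _ hbc, hpath.tail (hsub _ hb _ hbc)⟩

theorem IsLeafSCC.of_le (hAB : A ≤ B) (hBA : ∀ i ∈ T, ∀ j, B i j → A i j)
    (hT : IsLeafSCC B T) : IsLeafSCC A T := by
  obtain ⟨⟨hne, hconn, hmax⟩, htwo, hclosed⟩ := hT
  refine ⟨⟨hne, fun i hi j hj => ?_, ?_⟩, htwo, fun i hi j hij => hclosed i hi j (hAB i j hij)⟩
  · exact ((hconn i hi j hj).mem_and_of_closed hclosed hBA hi).2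
  · rintro w ⟨i, hi, hiw, hwi⟩
    exact hmax w ⟨i, hi, ReflTransGen.mono hAB _ _ hiw, ReflTransGen.mono hAB _ _ hwi⟩

theorem IsLeafSCC.of_add_arc {v u : V} (hvT : v ∉ T)
    (hT : IsLeafSCC (fun a b => A a b ∨ (a = v ∧ b = u)) T) : IsLeafSCC A T :=
  hT.of_le (fun _ _ => Or.inl) fun _ hi _ hij =>
    hij.resolve_right fun ⟨hiv, _⟩ => hvT (hiv ▸ hi)

end

theorem add_arc_leafSCC_count_general {V : Type*} [Fintype V] (A : V → V → Prop)
    (S : Set V) (hS : IsLeafSCC A S) (v : V) (hv : v ∈ S) (u : V) :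
    {T : Set V | IsLeafSCC (fun a b => A a b ∨ (a = v ∧ b = u)) T}.ncard ≤
      {T : Set V | IsLeafSCC A T}.ncard := by
  classical
  refine Set.ncard_le_ncard_of_injOn (fun T => if v ∈ T then S else T) (fun T hT => ?_) ?_
  · by_cases hvT : v ∈ T
    · simpa [hvT] using hS
    · simpa [hvT] using hT.of_add_arc hvT
  · intro T₁ hT₁ T₂ hT₂ heq
    by_cases hv₁ : v ∈ T₁ <;> by_cases hv₂ : v ∈ T₂ <;>
      simp only [hv₁, hv₂, if_true, if_false] at heq
    · exact hT₁.1.eq_of_mem hT₂.1 hv₁ hv₂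
    · exact absurd (heq ▸ hv) hv₂
    · exact absurd (heq ▸ hv) hv₁
    · exact heq

/-- Adding a single arc from a vertex `v` of a leaf SCC `S` to a
vertex `u` outside `S` cannot increase the number of leaf SCCs. -/
theorem add_arc_leafSCC_count {V : Type*} [Fintype V] (A : V → V → Prop)
    (S : Set V) (hS : IsLeafSCC A S) (v : V) (hv : v ∈ S) (u : V) (hu : u ∉ S) :
    {T : Set V | IsLeafSCC (fun a b => A a b ∨ (a = v ∧ b = u)) T}.ncard ≤
      {T : Set V | IsLeafSCC A T}.ncard :=
  add_arc_leafSCC_count_general A S hS v hv u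
end
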